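/- Let D(r,s) be the covariance double contour integral (see context). For all integers r ≥ s ≥ 1, the complex number D(r,s) is a strictly positive real number, i.e., its imaginary part is zero and its real part is positive. -/

import Mathlib

open MeasureTheory Filter Finset

/-- The covariance double contour integral `D(r,s)` of slowed `t`-TASEP:
`D(r,s) = (1/(4π²)) ∮_{|z|=R} ∮_{|w|=ρ} (w/(z−w)) (r!s!/(z^r w^s)) e^{z+w} (1−z/r)(1−w/s) (dz/z)(dw/w)`,
with both circles centered at the origin, traversed counterclockwise, and the inner
integral in `w` performed first. -/
noncomputable def covD (r s : ℕ) (R ρ : ℝ) : ℂ :=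
  (1 / (4 * (Real.pi : ℂ) ^ 2)) *
    ∮ z in C(0, R),
      (∮ w in C(0, ρ),
        w / (z - w) * ((r.factorial : ℂ) * (s.factorial : ℂ) / (z ^ r * w ^ s)) *
          Complex.exp (z + w) * (1 - z / (r : ℂ)) * (1 - w / (s : ℂ)) / w) / z

/-!
Both contour integrals are computed by residues. Splitting `1/((z - w) wˢ)` into partial fractions
in `w` leaves poles at `0` only, plus the term `1/(zˢ (z - w))`, which is holomorphic on the disc
`|w| ≤ ρ < |z|`. Hence the inner integral is `2πi ∑_{j<s} c_j z^{j-s}`, where `c_j = (1 - j/s)/j!`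
is the `j`-th Taylor coefficient of `eʷ(1 - w/s)` at `0`. The `j`-th term leaves the outer
integrand `eᶻ(1 - z/r) / z^{r+s-j+1}`, whose residue is `(1 - (r+s-j)/r)/(r+s-j)!`, that is
`-(s-j)/(r (r+s-j)!)`. Since `(2πi)² = -4π²`, the two signs cancel and
`D(r,s) = ∑_{j<s} r! s! (s-j)² / (r s j! (r+s-j)!)`, a nonempty sum of positive reals.
-/

open Complex Metric Real

theorem iteratedDeriv_exp_mul_one_sub_div (a : ℂ) (n : ℕ) :
    iteratedDeriv n (fun w => cexp w * (1 - w / a)) = fun w => cexp w * (1 - (w + n) / a) := by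
  induction n with
  | zero => simp
  | succ n ih =>
    rw [iteratedDeriv_succ, ih]
    ext w
    have hderiv := (hasDerivAt_exp w).fun_mul
      (((hasDerivAt_id' w).add_const (n : ℂ)).div_const a |>.const_sub 1)
    rw [hderiv.deriv]
    push_cast
    ring

theorem circleIntegral_div_pow_succ {g : ℂ → ℂ} {ρ : ℝ} (hρ : 0 < ρ)
    (hg : DifferentiableOn ℂ g (closedBall 0 ρ)) (n : ℕ) :
    ∮ w in C(0, ρ), g w / w ^ (n + 1) = 2 * π * I / n.factorial * iteratedDeriv n g 0 := by
  simpa [div_eq_inv_mul] using hg.circleIntegral_one_div_sub_center_pow_smul hρ n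

theorem inv_sub_mul_pow_eq_sum {z w : ℂ} (hz : z ≠ 0) (hw : w ≠ 0) (hzw : z ≠ w) (s : ℕ) :
    ((z - w) * w ^ s)⁻¹ =
      ∑ j ∈ range s, (z ^ (s - j))⁻¹ * (w ^ (j + 1))⁻¹ + (z ^ s)⁻¹ * (z - w)⁻¹ := by
  have hzw' : z - w ≠ 0 := sub_ne_zero.mpr hzw
  induction s with
  | zero => simp
  | succ s ih =>
    have hstep : ((z - w) * w ^ (s + 1))⁻¹ =
        z⁻¹ * (w ^ (s + 1))⁻¹ + z⁻¹ * ((z - w) * w ^ s)⁻¹ := by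
      field_simp
      ring
    have hshift : ∀ j ∈ range s, z⁻¹ * ((z ^ (s - j))⁻¹ * (w ^ (j + 1))⁻¹) =
        (z ^ (s + 1 - j))⁻¹ * (w ^ (j + 1))⁻¹ := fun j hj => by
      rw [Nat.sub_add_comm (mem_range.mp hj).le, pow_succ]
      ring
    rw [hstep, ih, sum_range_succ, mul_add, mul_sum, sum_congr rfl hshift,
      Nat.add_sub_cancel_left, pow_one, pow_succ]
    ring

theorem circleIntegral_div_sub_mul_pow {g : ℂ → ℂ} {ρ : ℝ} (hρ : 0 < ρ)
    (hg : DifferentiableOn ℂ g (closedBall 0 ρ)) {z : ℂ} (hz : ρ < ‖z‖) (s : ℕ) :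
    ∮ w in C(0, ρ), g w / ((z - w) * w ^ s) =
      2 * π * I * ∑ j ∈ range s, iteratedDeriv j g 0 / j.factorial * (z ^ (s - j))⁻¹ := by
  have hz₀ : z ≠ 0 := norm_pos_iff.mp (hρ.trans hz)
  have hzw : ∀ w ∈ closedBall (0 : ℂ) ρ, z - w ≠ 0 := fun w hw h => by
    rw [sub_eq_zero.mp h] at hz; linarith [mem_closedBall_zero_iff.mp hw]
  have hw₀ : ∀ w ∈ sphere (0 : ℂ) ρ, w ≠ 0 := fun w hw =>
    ne_zero_of_mem_sphere hρ.ne' ⟨w, hw⟩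
  have hsplit : Set.EqOn (fun w => g w / ((z - w) * w ^ s))
      (fun w => ∑ j ∈ range s, (z ^ (s - j))⁻¹ * (g w / w ^ (j + 1)) +
        (z ^ s)⁻¹ * (g w / (z - w))) (sphere 0 ρ) := fun w hw => by
    simp only [div_eq_mul_inv (g w), inv_sub_mul_pow_eq_sum hz₀ (hw₀ w hw)
      (sub_ne_zero.mp (hzw w (sphere_subset_closedBall hw))), mul_add, mul_sum]
    congr 1
    · exact sum_congr rfl fun j _ => by ring
    · ring
  have hpole : ∀ j,
      ContinuousOn (fun w => (z ^ (s - j))⁻¹ * (g w / w ^ (j + 1))) (sphere 0 ρ) :=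
    fun j => continuousOn_const.mul <| (hg.continuousOn.mono sphere_subset_closedBall).div
      (continuousOn_pow _) fun w hw => pow_ne_zero _ (hw₀ w hw)
  have hreg : DifferentiableOn ℂ (fun w => g w / (z - w)) (closedBall 0 ρ) :=
    hg.div (by fun_prop) hzw
  have hlast : ContinuousOn (fun w => (z ^ s)⁻¹ * (g w / (z - w))) (sphere 0 ρ) :=
    continuousOn_const.mul (hreg.continuousOn.mono sphere_subset_closedBall)
  rw [circleIntegral.integral_congr hρ.le hsplit, circleIntegral.integral_add
    ((continuousOn_finsetSum _ fun j _ => hpole j).circleIntegrable hρ.le)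
    (hlast.circleIntegrable hρ.le),
    circleIntegral.integral_fun_sum fun j _ => (hpole j).circleIntegrable hρ.le,
    circleIntegral.integral_const_mul,
    (hreg.mono closure_ball_subset_closedBall).diffContOnCl.circleIntegral_eq_zero hρ.le,
    mul_zero, add_zero, mul_sum]
  refine sum_congr rfl fun j _ => ?_
  rw [circleIntegral.integral_const_mul, circleIntegral_div_pow_succ hρ hg]
  ring

theorem covD_integrand_eq_sum {ρ : ℝ} (hρ : 0 < ρ) (r s : ℕ) {z : ℂ} (hz : ρ < ‖z‖) :
    (∮ w in C(0, ρ),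
        w / (z - w) * ((r.factorial : ℂ) * (s.factorial : ℂ) / (z ^ r * w ^ s)) *
          Complex.exp (z + w) * (1 - z / (r : ℂ)) * (1 - w / (s : ℂ)) / w) / z =
      ∑ j ∈ range s, 2 * π * I * r.factorial * s.factorial * (1 - j / s) / j.factorial *
        (cexp z * (1 - z / r) / z ^ (r + (s - j) + 1)) := by
  have hz₀ : z ≠ 0 := norm_pos_iff.mp (hρ.trans hz)
  have hfactor : Set.EqOn
      (fun w => w / (z - w) * ((r.factorial : ℂ) * (s.factorial : ℂ) / (z ^ r * w ^ s)) *
          Complex.exp (z + w) * (1 - z / (r : ℂ)) * (1 - w / (s : ℂ)) / w)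
      (fun w => r.factorial * s.factorial * cexp z * (1 - z / r) / z ^ r *
          (cexp w * (1 - w / s) / ((z - w) * w ^ s))) (sphere 0 ρ) := fun w hw => by
    have hw₀ : w ≠ 0 := ne_zero_of_mem_sphere hρ.ne' ⟨w, hw⟩
    simp only [Complex.exp_add]
    field_simp
  rw [circleIntegral.integral_congr hρ.le hfactor, circleIntegral.integral_const_mul,
    circleIntegral_div_sub_mul_pow hρ (by fun_prop) hz, mul_sum, mul_sum, sum_div]
  refine sum_congr rfl fun j _ => ?_
  simp only [iteratedDeriv_exp_mul_one_sub_div, Complex.exp_zero, zero_add, one_mul, pow_succ,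
    pow_add]
  field_simp

theorem covD_eq_sum {r : ℕ} (hr : r ≠ 0) (s : ℕ) {ρ R : ℝ} (hρ : 0 < ρ) (hρR : ρ < R) :
    covD r s R ρ = ((∑ j ∈ range s, r.factorial * s.factorial * ((s : ℝ) - j) ^ 2 /
      (r * s * j.factorial * (r + (s - j)).factorial) : ℝ) : ℂ) := by
  have hR : 0 < R := hρ.trans hρR
  have hinner : Set.EqOn _ _ (sphere (0 : ℂ) R) := fun z hz =>
    covD_integrand_eq_sum hρ r s (z := z) (by rwa [mem_sphere_zero_iff_norm.mp hz])
  have hpole : ∀ j ∈ range s, ContinuousOn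
      (fun z => 2 * π * I * r.factorial * s.factorial * (1 - j / s) / j.factorial *
        (cexp z * (1 - z / r) / z ^ (r + (s - j) + 1))) (sphere 0 R) := fun j _ =>
    have hnum : Continuous fun z => cexp z * (1 - z / r) := by fun_prop
    continuousOn_const.mul <| hnum.continuousOn.div (continuousOn_pow _)
      fun z hz => pow_ne_zero _ (ne_zero_of_mem_sphere hR.ne' ⟨z, hz⟩)
  rw [covD, circleIntegral.integral_congr hR.le hinner,
    circleIntegral.integral_fun_sum fun j hj => (hpole j hj).circleIntegrable hR.le, mul_sum,
    ofReal_sum]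
  refine sum_congr rfl fun j hj => ?_
  rw [circleIntegral.integral_const_mul, circleIntegral_div_pow_succ hR (by fun_prop),
    iteratedDeriv_exp_mul_one_sub_div]
  have hjs : j < s := mem_range.mp hj
  have hπ : (π : ℂ) ≠ 0 := ofReal_ne_zero.mpr pi_ne_zero
  have hs : (s : ℂ) ≠ 0 := Nat.cast_ne_zero.mpr (Nat.ne_zero_of_lt hjs)
  push_cast [Nat.cast_sub hjs.le]
  simp only [Complex.exp_zero, zero_add, one_mul]
  field_simp
  linear_combination (-4 * r.factorial * s.factorial * ((s : ℂ) - j) ^ 2 /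
    (j.factorial * (r + (s - j)).factorial)) * I_sq

/-- For all integers `r ≥ s ≥ 1`, the complex number `D(r,s)` is a strictly positive
real number: its imaginary part vanishes and its real part is positive. -/
theorem covD_pos_real (r s : ℕ) (hs : 1 ≤ s) (hsr : s ≤ r)
    (ρ R : ℝ) (hρ : 0 < ρ) (hρR : ρ < R) :
    (covD r s R ρ).im = 0 ∧ 0 < (covD r s R ρ).re := by
  rw [covD_eq_sum (by omega) s hρ hρR, ofReal_im, ofReal_re]
  refine ⟨rfl, sum_pos (fun j hj => ?_) (nonempty_range_iff.mpr (by omega))⟩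
  have hjs : (j : ℝ) < s := by exact_mod_cast mem_range.mp hj
  have hr : (0 : ℝ) < r := by exact_mod_cast (by omega : 0 < r)
  have hs₀ : (0 : ℝ) < s := by exact_mod_cast hs
  have hsj : 0 < ((s : ℝ) - j) ^ 2 := pow_pos (sub_pos.mpr hjs) 2
  positivity
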